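/- arXiv:2309.12752 — 2 statements merged into one kernel-verified Lean document; each statement's English description precedes it below -/
import Mathlib

section
/- For λ > γ > 0 and μ > 0 sufficiently small, the steady state x₊(μ) of the simplicial 2-complex mean-field model is strictly greater than the pairwise steady state 1 − γ/λ, i.e. the 2-simplex infection pressure strictly increases the endemic equilibrium. -/
/-- For small μ > 0 the endemic steady state exceeds the pairwise one 1 - γ/λ. -/
theorem stmt_7 (lam gam : ℝ) (hgam : 0 < gam) (h : gam < lam) :
    ∃ ε > (0 : ℝ), ∀ mu : ℝ, 0 < mu → mu < ε →
      1 - gam / lam <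
        ((mu / 2 - lam) + Real.sqrt ((mu / 2 - lam) ^ 2 + 2 * mu * (lam - gam))) / mu := by
  have hlam : 0 < lam := hgam.trans h
  refine ⟨lam, hlam, fun mu hmu hmul => ?_⟩
  have hg1 : gam / lam < 1 := (div_lt_one hlam).mpr h
  have hg0 : 0 < gam / lam := div_pos hgam hlam
  have hcpos : 0 < mu * (1 - gam / lam) - (mu / 2 - lam) := by
    have h1 : mu * (gam / lam) < mu * 1 := mul_lt_mul_of_pos_left hg1 hmu
    nlinarith
  have hkey : (mu * (1 - gam / lam) - (mu / 2 - lam)) ^ 2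
      + mu ^ 2 * (gam / lam) * (1 - gam / lam)
      = (mu / 2 - lam) ^ 2 + 2 * mu * (lam - gam) := by
    field_simp
    ring
  have hc2 : (mu * (1 - gam / lam) - (mu / 2 - lam)) ^ 2
      < (mu / 2 - lam) ^ 2 + 2 * mu * (lam - gam) := by
    nlinarith [mul_pos (mul_pos (pow_pos hmu 2) hg0) (by linarith : (0:ℝ) < 1 - gam / lam)]
  have hs : mu * (1 - gam / lam) - (mu / 2 - lam)
      < Real.sqrt ((mu / 2 - lam) ^ 2 + 2 * mu * (lam - gam)) := by
    rw [show mu * (1 - gam / lam) - (mu / 2 - lam)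
        = Real.sqrt ((mu * (1 - gam / lam) - (mu / 2 - lam)) ^ 2) by
      rw [Real.sqrt_sq hcpos.le]]
    exact Real.sqrt_lt_sqrt (by positivity) hc2
  rw [lt_div_iff₀ hmu]
  nlinarith [hs]
end

section
/- If parameters satisfy λ > −μ/2 + √(2μγ), λ < γ, and μ > 2λ > 0, then the cubic F(x) = (λ − γ)x + (μ/2 − λ)x² − (μ/2)x³ has exactly three nonnegative real roots: x = 0 and two distinct positive roots. -/
/-!
The cubic factors as `x * q x` with `q x = -(μ/2) x² + (μ/2 - λ) x + (λ - γ)`. The hypothesis on `λ` makes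
the discriminant `(μ/2 - λ)² + 2μ(λ - γ)` of `q` positive, so `q` has two
distinct real roots; their product `(γ - λ)/(μ/2)` and sum `(μ/2 - λ)/(μ/2)` are positive, so both
roots are positive.
-/

theorem exists_two_pos_roots_of_discrim_pos {a b c : ℝ} (ha : a < 0) (hb : 0 < b) (hc : c < 0)
    (hD : 0 < discrim a b c) :
    ∃ x₁ x₂ : ℝ, 0 < x₁ ∧ 0 < x₂ ∧ x₁ ≠ x₂ ∧
      ∀ x : ℝ, a * (x * x) + b * x + c = 0 ↔ x = x₁ ∨ x = x₂ := by
  set s := √(discrim a b c)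
  have hs : 0 < s := Real.sqrt_pos.mpr hD
  have hss : discrim a b c = s * s := (Real.mul_self_sqrt hD.le).symm
  have hsb : s < b := by
    have : s * s < b * b := by rw [← hss, discrim]; nlinarith
    nlinarith
  refine ⟨(-b + s) / (2 * a), (-b - s) / (2 * a), div_pos_of_neg_of_neg (by linarith) (by linarith),
    div_pos_of_neg_of_neg (by linarith) (by linarith), ?_, quadratic_eq_zero_iff ha.ne hss⟩
  rw [Ne, div_left_inj' (by linarith)]
  linarith

theorem discrim_pos_of_sqrt_lt {lam mu gam : ℝ} (hd : -mu / 2 + √(2 * mu * gam) < lam) :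
    0 < discrim (-(mu / 2)) (mu / 2 - lam) (lam - gam) := by
  have h := Real.lt_sq_of_sqrt_lt (show √(2 * mu * gam) < lam + mu / 2 by linarith)
  rw [discrim]
  linear_combination h

theorem stmt_16_general (lam mu gam : ℝ) (hmu : 0 < mu)
    (hd : -mu / 2 + Real.sqrt (2 * mu * gam) < lam) (hlg : lam < gam) (hml : 2 * lam < mu) :
    ∃ x₁ x₂ : ℝ, 0 < x₁ ∧ 0 < x₂ ∧ x₁ ≠ x₂ ∧
      ∀ x : ℝ, 0 ≤ x →
        ((lam - gam) * x + (mu / 2 - lam) * x ^ 2 - mu / 2 * x ^ 3 = 0 ↔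
          x = 0 ∨ x = x₁ ∨ x = x₂) := by
  obtain ⟨x₁, x₂, hx₁, hx₂, hne, hroots⟩ :=
    exists_two_pos_roots_of_discrim_pos (by linarith) (by linarith) (by linarith)
      (discrim_pos_of_sqrt_lt hd)
  refine ⟨x₁, x₂, hx₁, hx₂, hne, fun x _ => ?_⟩
  have hfactor : (lam - gam) * x + (mu / 2 - lam) * x ^ 2 - mu / 2 * x ^ 3 =
      x * (-(mu / 2) * (x * x) + (mu / 2 - lam) * x + (lam - gam)) := by ring
  rw [hfactor, mul_eq_zero, hroots]

/-- In region C the cubic has exactly the nonnegative roots 0 and two distinct positive ones. -/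
theorem stmt_16 (lam mu gam : ℝ) (hlam : 0 < lam) (hmu : 0 < mu) (hgam : 0 < gam)
    (hd : -mu / 2 + Real.sqrt (2 * mu * gam) < lam) (hlg : lam < gam) (hml : 2 * lam < mu) :
    ∃ x₁ x₂ : ℝ, 0 < x₁ ∧ 0 < x₂ ∧ x₁ ≠ x₂ ∧
      ∀ x : ℝ, 0 ≤ x →
        ((lam - gam) * x + (mu / 2 - lam) * x ^ 2 - mu / 2 * x ^ 3 = 0 ↔
          x = 0 ∨ x = x₁ ∨ x = x₂) :=
  stmt_16_general lam mu gam hmu hd hlg hml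
end
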